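/- Let U₁, U₂ be subspaces of H with U₁ ∩ U₂ = {0}, where U₂ decomposes into m mutually M-orthogonal blocks, and suppose |⟨u₁,u₂⟩_M| ≤ c_F ‖u₁‖_M‖u₂‖_M for all u₁ ∈ U₁, u₂ ∈ U₂, with c_F ≤ √((1-θ)/(1-αθ)) for given θ ∈ (0,1], α ∈ (0,1]. Let I ∈ [0,1]^m be a random selection vector with E[I] = α·1, and for u = g + h (g ∈ U₁, h = Σ hᵢ ∈ U₂ with hᵢ in the i-th block), define u_I = αg + Σᵢ Iᵢ hᵢ. Then E[u_I] = αu and E[‖u_I‖_M²] ≤ β‖u‖_M² with β = α² + (α - α²)/(1 - c_F²), and moreover βθ ≤ α. -/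

import Mathlib

/-!
Write `u = g + h` with `h = ∑ hᵢ`. Since the blocks are `M`-orthogonal, expanding
`‖α g + ∑ Iᵢ hᵢ‖²_M` leaves no cross terms between blocks, and `Iᵢ² ≤ Iᵢ` gives
`E‖u_I‖²_M ≤ α²‖u‖²_M + (α - α²)‖h‖²_M`. Completing the square in the Friedrichs bound gives
`(1 - c_F²)‖h‖²_M ≤ ‖u‖²_M`, which yields `β`. The constraint on `c_F` is equivalent to
`θ(1 - α) ≤ (1 - c_F²)(1 - αθ)`, and this is exactly `βθ ≤ α`.
-/

open MeasureTheory

/-- The `M`-inner product induced by a positive definite self-adjoint operator `M`. -/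
noncomputable def Minner {H : Type*} [NormedAddCommGroup H] [InnerProductSpace ℝ H]
    (M : H →L[ℝ] H) (x y : H) : ℝ := inner ℝ x (M y)

/-- The `M`-norm. -/
noncomputable def Mnorm {H : Type*} [NormedAddCommGroup H] [InnerProductSpace ℝ H]
    (M : H →L[ℝ] H) (x : H) : ℝ := Real.sqrt (Minner M x x)

namespace LinearMap.BilinForm

variable {E ι : Type*} [AddCommGroup E] [Module ℝ E] [Fintype ι] {B : LinearMap.BilinForm ℝ E}

theorem apply_sum_smul_self_of_isOrthoᵢ {v : ι → E} (hv : B.IsOrthoᵢ v) (c : ι → ℝ) :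
    B (∑ i, c i • v i) (∑ i, c i • v i) = ∑ i, c i ^ 2 * B (v i) (v i) := by
  simp only [sum_left, sum_right, smul_left, smul_right]
  refine Finset.sum_congr rfl fun i _ => ?_
  rw [Finset.sum_eq_single i (fun j _ hji => by simp [hv hji]) (by simp)]
  ring

theorem apply_sum_self_of_isOrthoᵢ {v : ι → E} (hv : B.IsOrthoᵢ v) :
    B (∑ i, v i) (∑ i, v i) = ∑ i, B (v i) (v i) := by
  simpa using apply_sum_smul_self_of_isOrthoᵢ hv 1

theorem IsSymm.apply_add_sum_smul_self_of_isOrthoᵢ (hB : B.IsSymm) {v : ι → E}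
    (hv : B.IsOrthoᵢ v) (x : E) (c : ι → ℝ) :
    B (x + ∑ i, c i • v i) (x + ∑ i, c i • v i) =
      B x x + 2 * ∑ i, c i * B x (v i) + ∑ i, c i ^ 2 * B (v i) (v i) := by
  rw [add_left, add_right, add_right, apply_sum_smul_self_of_isOrthoᵢ hv,
    hB.eq (∑ i, c i • v i) x, sum_right]
  simp only [smul_right]
  ring

/-- Complete the square: `B (x + y) (x + y) ≥ (√(B x x) - c √(B y y))² + (1 - c²) B y y`. -/
theorem IsSymm.one_sub_sq_mul_apply_self_le (hB : B.IsSymm) {x y : E} {c : ℝ}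
    (hx : 0 ≤ B x x) (hy : 0 ≤ B y y)
    (hxy : |B x y| ≤ c * √(B x x) * √(B y y)) :
    (1 - c ^ 2) * B y y ≤ B (x + y) (x + y) := by
  have hexpand : B (x + y) (x + y) = B x x + 2 * B x y + B y y := by
    rw [add_left, add_right, add_right, hB.eq y x]; ring
  rw [hexpand, ← Real.sq_sqrt hx, ← Real.sq_sqrt hy]
  nlinarith [neg_abs_le (B x y), sq_nonneg (√(B x x) - c * √(B y y))]

end LinearMap.BilinForm

section RandomSelection

variable {Ω ι : Type*} [MeasurableSpace Ω] {μ : Measure Ω} [IsProbabilityMeasure μ] [Fintype ι]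
  {I : Ω → ι → ℝ} {α : ℝ}

theorem integral_add_sum_smul_of_integral_eq {E : Type*} [NormedAddCommGroup E]
    [NormedSpace ℝ E] [CompleteSpace E] (hint : ∀ i, Integrable (fun ω => I ω i) μ)
    (hmean : ∀ i, ∫ ω, I ω i ∂μ = α) (x : E) (v : ι → E) :
    ∫ ω, (x + ∑ i, I ω i • v i) ∂μ = x + α • ∑ i, v i := by
  rw [integral_add (integrable_const x)
      (integrable_finsetSum _ fun i _ => (hint i).smul_const (v i)),
    integral_const, integral_finsetSum _ fun i _ => (hint i).smul_const (v i)]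
  simp only [integral_smul_const, hmean, probReal_univ, one_smul, Finset.smul_sum]

variable {E : Type*} [AddCommGroup E] [Module ℝ E] {B : LinearMap.BilinForm ℝ E}

open LinearMap.BilinForm in
/-- Orthogonality removes the cross terms between blocks, and `Iᵢ² ≤ Iᵢ` on `[0, 1]`. -/
theorem integral_apply_add_sum_smul_self_le (hB : B.IsSymm) (hB₀ : ∀ x, 0 ≤ B x x)
    {v : ι → E} (hv : B.IsOrthoᵢ v) (hI : ∀ ω i, I ω i ∈ Set.Icc (0 : ℝ) 1)
    (hint : ∀ i, Integrable (fun ω => I ω i) μ) (hmean : ∀ i, ∫ ω, I ω i ∂μ = α) (g : E) :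
    ∫ ω, B (α • g + ∑ i, I ω i • v i) (α • g + ∑ i, I ω i • v i) ∂μ ≤
      α ^ 2 * B (g + ∑ i, v i) (g + ∑ i, v i) + (α - α ^ 2) * B (∑ i, v i) (∑ i, v i) := by
  set k : ι → ℝ := fun i => 2 * α * B g (v i) + B (v i) (v i)
  have hpointwise : ∀ ω, B (α • g + ∑ i, I ω i • v i) (α • g + ∑ i, I ω i • v i) ≤
      α ^ 2 * B g g + ∑ i, I ω i • k i := by
    intro ω
    have hsq : ∀ i, I ω i ^ 2 * B (v i) (v i) ≤ I ω i * B (v i) (v i) := fun i =>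
      have ⟨h0, h1⟩ := hI ω i
      mul_le_mul_of_nonneg_right (by nlinarith) (hB₀ _)
    rw [hB.apply_add_sum_smul_self_of_isOrthoᵢ hv]
    simp only [k, smul_left, smul_right, smul_eq_mul, mul_add, Finset.sum_add_distrib,
      Finset.mul_sum]
    have hcross : ∑ i, 2 * (I ω i * (α * B g (v i))) = ∑ i, I ω i * (2 * α * B g (v i)) :=
      Finset.sum_congr rfl fun i _ => by ring
    linarith [Finset.sum_le_sum fun i (_ : i ∈ Finset.univ) => hsq i]
  calc ∫ ω, B (α • g + ∑ i, I ω i • v i) (α • g + ∑ i, I ω i • v i) ∂μ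
      ≤ ∫ ω, (α ^ 2 * B g g + ∑ i, I ω i • k i) ∂μ :=
        integral_mono_of_nonneg (ae_of_all _ fun _ => hB₀ _)
          ((integrable_const _).add (integrable_finsetSum _ fun i _ => (hint i).smul_const _))
          (ae_of_all _ hpointwise)
    _ = α ^ 2 * B g g + α • ∑ i, k i := integral_add_sum_smul_of_integral_eq hint hmean _ _
    _ = _ := by
      have := hB.apply_add_sum_smul_self_of_isOrthoᵢ hv g 1
      simp only [Pi.one_apply, one_smul, one_mul, one_pow] at this
      rw [this, apply_sum_self_of_isOrthoᵢ hv]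
      simp only [k, smul_eq_mul, Finset.sum_add_distrib, ← Finset.mul_sum]
      ring

end RandomSelection

section SelectionConstant

variable {θ α c : ℝ}

/-- The constant `β` of the paper. -/
noncomputable def selectionConstant (α c : ℝ) : ℝ := α ^ 2 + (α - α ^ 2) / (1 - c ^ 2)

theorem mul_one_sub_le_of_le_sqrt (hθ₀ : 0 ≤ θ) (hθ₁ : θ ≤ 1) (hα₁ : α ≤ 1) (hc₀ : 0 ≤ c)
    (hc : c ≤ √((1 - θ) / (1 - α * θ))) : θ * (1 - α) ≤ (1 - c ^ 2) * (1 - α * θ) := by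
  have hαθ : α * θ ≤ 1 := by nlinarith
  have hc2 := (Real.le_sqrt hc₀ (div_nonneg (by linarith) (by linarith))).1 hc
  rcases hαθ.lt_or_eq with hlt | heq
  · have := (le_div_iff₀ (by linarith)).1 hc2
    nlinarith
  · -- `α = θ = 1`, where the quotient is the junk value `0 / 0 = 0`
    rw [heq]
    nlinarith

theorem one_sub_sq_pos_of_mul_one_sub_le (hθ₀ : 0 < θ) (hθ₁ : θ ≤ 1) (hα₁ : α < 1)
    (h : θ * (1 - α) ≤ (1 - c ^ 2) * (1 - α * θ)) : 0 < 1 - c ^ 2 := by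
  have hαθ : 0 < 1 - α * θ := by nlinarith
  exact pos_of_mul_pos_left (lt_of_lt_of_le (by nlinarith) h) hαθ.le

theorem selectionConstant_mul_le (hθ₀ : 0 < θ) (hθ₁ : θ ≤ 1) (hα₀ : 0 ≤ α) (hα₁ : α ≤ 1)
    (h : θ * (1 - α) ≤ (1 - c ^ 2) * (1 - α * θ)) : selectionConstant α c * θ ≤ α := by
  rcases hα₁.lt_or_eq with hα₁ | rfl
  · have hD := one_sub_sq_pos_of_mul_one_sub_le hθ₀ hθ₁ hα₁ h
    have : (α - α ^ 2) / (1 - c ^ 2) * θ ≤ α * (1 - α * θ) := by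
      rw [div_mul_eq_mul_div, div_le_iff₀ hD]
      nlinarith [mul_le_mul_of_nonneg_left h hα₀]
    unfold selectionConstant
    linarith
  · simpa [selectionConstant] using hθ₁

theorem sq_mul_add_le_selectionConstant_mul {x y : ℝ} (hθ₀ : 0 < θ) (hθ₁ : θ ≤ 1)
    (hα₀ : 0 ≤ α) (hα₁ : α ≤ 1) (h : θ * (1 - α) ≤ (1 - c ^ 2) * (1 - α * θ))
    (hyx : (1 - c ^ 2) * y ≤ x) :
    α ^ 2 * x + (α - α ^ 2) * y ≤ selectionConstant α c * x := by
  rcases hα₁.lt_or_eq with hα₁ | rfl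
  · have hD := one_sub_sq_pos_of_mul_one_sub_le hθ₀ hθ₁ hα₁ h
    have hy : y ≤ x / (1 - c ^ 2) := by rw [le_div_iff₀ hD]; linarith
    have := mul_le_mul_of_nonneg_left hy (by nlinarith : 0 ≤ α - α ^ 2)
    rw [selectionConstant, add_mul, div_mul_eq_mul_div, mul_div_assoc]
    linarith
  · simp [selectionConstant]

end SelectionConstant

section Minner

variable {H : Type*} [NormedAddCommGroup H] [InnerProductSpace ℝ H] {M : H →L[ℝ] H}

variable (M) in
noncomputable def bilinFormOfMinner : LinearMap.BilinForm ℝ H :=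
  (innerₗ H).compl₂ (M : H →ₗ[ℝ] H)

@[simp]
theorem bilinFormOfMinner_apply (x y : H) : bilinFormOfMinner M x y = Minner M x y := rfl

theorem bilinFormOfMinner_isSymm (hM : ∀ x y : H, (inner ℝ (M x) y : ℝ) = inner ℝ x (M y)) :
    (bilinFormOfMinner M).IsSymm :=
  ⟨fun x y => by rw [bilinFormOfMinner_apply, bilinFormOfMinner_apply, Minner, Minner, ← hM,
    real_inner_comm]⟩

theorem Minner_self_nonneg (hM : ∀ x : H, x ≠ 0 → 0 < (inner ℝ x (M x) : ℝ)) (x : H) :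
    0 ≤ Minner M x x := by
  rcases eq_or_ne x 0 with rfl | hx
  · simp [Minner]
  · exact (hM x hx).le

theorem Mnorm_sq (hM : ∀ x : H, x ≠ 0 → 0 < (inner ℝ x (M x) : ℝ)) (x : H) :
    Mnorm M x ^ 2 = Minner M x x :=
  Real.sq_sqrt (Minner_self_nonneg hM x)

end Minner

theorem stmt9_general {H : Type*} [NormedAddCommGroup H] [InnerProductSpace ℝ H]
    [CompleteSpace H]
    {Ω : Type*} [MeasurableSpace Ω] (μ : Measure Ω) [IsProbabilityMeasure μ]
    (M : H →L[ℝ] H)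
    (hMsym : ∀ x y : H, (inner ℝ (M x) y : ℝ) = inner ℝ x (M y))
    (hMpos : ∀ x : H, x ≠ 0 → 0 < (inner ℝ x (M x) : ℝ))
    (U₁ U₂ : Submodule ℝ H)
    (m : ℕ) (V : Fin m → Submodule ℝ H) (hVU₂ : ∀ i, V i ≤ U₂)
    (horth : ∀ i j, i ≠ j → ∀ x ∈ V i, ∀ y ∈ V j, Minner M x y = 0)
    (θ α cF : ℝ) (hθ : θ ∈ Set.Ioc (0 : ℝ) 1) (hα : α ∈ Set.Ioc (0 : ℝ) 1)
    (hcF0 : 0 ≤ cF) (hcF : cF ≤ Real.sqrt ((1 - θ) / (1 - α * θ)))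
    (hangle : ∀ u₁ ∈ U₁, ∀ u₂ ∈ U₂,
      |Minner M u₁ u₂| ≤ cF * Mnorm M u₁ * Mnorm M u₂)
    (I : Ω → Fin m → ℝ)
    (hIrange : ∀ ω i, I ω i ∈ Set.Icc (0 : ℝ) 1)
    (hImean : ∀ i, ∫ ω, I ω i ∂μ = α)
    (g : H) (hg : g ∈ U₁) (hv : Fin m → H) (hhv : ∀ i, hv i ∈ V i) :
    (∫ ω, (α • g + ∑ i, I ω i • hv i) ∂μ) = α • (g + ∑ i, hv i) ∧
      (∫ ω, (Mnorm M (α • g + ∑ i, I ω i • hv i)) ^ 2 ∂μ)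
        ≤ (α ^ 2 + (α - α ^ 2) / (1 - cF ^ 2)) * (Mnorm M (g + ∑ i, hv i)) ^ 2 ∧
      (α ^ 2 + (α - α ^ 2) / (1 - cF ^ 2)) * θ ≤ α := by
  obtain ⟨hθ₀, hθ₁⟩ := hθ
  obtain ⟨hα₀, hα₁⟩ := hα
  set B := bilinFormOfMinner M
  have hB : B.IsSymm := bilinFormOfMinner_isSymm hMsym
  have hB₀ : ∀ x, 0 ≤ B x x := Minner_self_nonneg hMpos
  have hortho : B.IsOrthoᵢ hv := fun i j hij => horth i j hij _ (hhv i) _ (hhv j)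
  have hint : ∀ i, Integrable (fun ω => I ω i) μ := fun i =>
    Integrable.of_integral_ne_zero (by rw [hImean i]; exact hα₀.ne')
  have hθα := mul_one_sub_le_of_le_sqrt hθ₀.le hθ₁ hα₁ hcF0 hcF
  refine ⟨by rw [integral_add_sum_smul_of_integral_eq hint hImean, smul_add], ?_,
    selectionConstant_mul_le hθ₀ hθ₁ hα₀.le hα₁ hθα⟩
  have hfriedrichs :
      (1 - cF ^ 2) * B (∑ i, hv i) (∑ i, hv i) ≤ B (g + ∑ i, hv i) (g + ∑ i, hv i) :=
    hB.one_sub_sq_mul_apply_self_le (hB₀ _) (hB₀ _)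
      (hangle g hg _ (U₂.sum_mem fun i _ => hVU₂ i (hhv i)))
  simp only [Mnorm_sq hMpos]
  calc _ ≤ α ^ 2 * B (g + ∑ i, hv i) (g + ∑ i, hv i)
        + (α - α ^ 2) * B (∑ i, hv i) (∑ i, hv i) :=
        integral_apply_add_sum_smul_self_le hB hB₀ hortho hIrange hint hImean g
    _ ≤ _ := sq_mul_add_le_selectionConstant_mul hθ₀ hθ₁ hα₀.le hα₁ hθα hfriedrichs

/-- With a non-orthogonal block `U₁` handled via the Friedrichs angle bound
`c_F ≤ √((1-θ)/(1-αθ))`, the randomized selection `u_I = αg + Σᵢ Iᵢhᵢ` satisfies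
`E[u_I] = αu` and `E[‖u_I‖_M²] ≤ β‖u‖_M²` with `β = α² + (α-α²)/(1-c_F²)` and `βθ ≤ α`. -/
theorem stmt9 {H : Type*} [NormedAddCommGroup H] [InnerProductSpace ℝ H]
    [CompleteSpace H]
    {Ω : Type*} [MeasurableSpace Ω] (μ : Measure Ω) [IsProbabilityMeasure μ]
    (M : H →L[ℝ] H)
    (hMsym : ∀ x y : H, (inner ℝ (M x) y : ℝ) = inner ℝ x (M y))
    (hMpos : ∀ x : H, x ≠ 0 → 0 < (inner ℝ x (M x) : ℝ))
    (U₁ U₂ : Submodule ℝ H) (hinter : U₁ ⊓ U₂ = ⊥)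
    (m : ℕ) (V : Fin m → Submodule ℝ H) (hVU₂ : ∀ i, V i ≤ U₂)
    (horth : ∀ i j, i ≠ j → ∀ x ∈ V i, ∀ y ∈ V j, Minner M x y = 0)
    (θ α cF : ℝ) (hθ : θ ∈ Set.Ioc (0 : ℝ) 1) (hα : α ∈ Set.Ioc (0 : ℝ) 1)
    (hcF0 : 0 ≤ cF) (hcF : cF ≤ Real.sqrt ((1 - θ) / (1 - α * θ)))
    (hangle : ∀ u₁ ∈ U₁, ∀ u₂ ∈ U₂,
      |Minner M u₁ u₂| ≤ cF * Mnorm M u₁ * Mnorm M u₂)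
    (I : Ω → Fin m → ℝ) (hImeas : Measurable I)
    (hIrange : ∀ ω i, I ω i ∈ Set.Icc (0 : ℝ) 1)
    (hImean : ∀ i, ∫ ω, I ω i ∂μ = α)
    (g : H) (hg : g ∈ U₁) (hv : Fin m → H) (hhv : ∀ i, hv i ∈ V i) :
    (∫ ω, (α • g + ∑ i, I ω i • hv i) ∂μ) = α • (g + ∑ i, hv i) ∧
      (∫ ω, (Mnorm M (α • g + ∑ i, I ω i • hv i)) ^ 2 ∂μ)
        ≤ (α ^ 2 + (α - α ^ 2) / (1 - cF ^ 2)) * (Mnorm M (g + ∑ i, hv i)) ^ 2 ∧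
      (α ^ 2 + (α - α ^ 2) / (1 - cF ^ 2)) * θ ≤ α :=
  stmt9_general μ M hMsym hMpos U₁ U₂ m V hVU₂ horth θ α cF hθ hα hcF0 hcF hangle I hIrange hImean g
    hg hv hhv
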